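/- The 5×5 companion-type matrix A^(j) (with first four rows the shift pattern e₂, e₃, e₄, e₅ and last row (A₅₁, A₅₂, A₅₃, A₅₄, A₅₅) as given) has characteristic polynomial p(λ) = Π_{m=1}^{5} (λ − v_j − c_m Δv) for five distinct real constants c₁,…,c₅ (the rescaled Gauss-Legendre nodes), and in particular A^(j) has five distinct real eigenvalues and is diagonalizable over ℝ. -/

import Mathlib

open Polynomial Matrix

/-- The flux Jacobian `A^(j)` of the 5-moment band system. -/
noncomputable def bandMatrix (Δv vj : ℝ) : Matrix (Fin 5) (Fin 5) ℝ :=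
  Matrix.of
    ![![0, 1, 0, 0, 0],
      ![0, 0, 1, 0, 0],
      ![0, 0, 0, 1, 0],
      ![0, 0, 0, 0, 1],
      ![5*Δv^4*vj/336 - 5*Δv^2*vj^3/18 + vj^5,
        -5*Δv^4/336 + 5*Δv^2*vj^2/6 - 5*vj^4,
        -5*Δv^2*vj/6 + 10*vj^3,
        (5/18) * (Δv^2 - 36*vj^2),
        5*vj]]

/-!
`A^(j)` is a companion matrix, so for every root `x` of its characteristic polynomial the vector
of powers `(1, x, …, x⁴)` is an eigenvector. The substitution `λ = vⱼ + t Δv` turns that polynomial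
into `Δv⁵ (t⁵ − 5t³/18 + 5t/336) = Δv⁵ P₅(2t) / 252`, whose roots are the Gauss–Legendre nodes
on `[-1/2, 1/2]`. Five distinct roots give an invertible (transposed) Vandermonde matrix that
diagonalizes `A^(j)`, and the characteristic polynomial is then that of the diagonal matrix.
-/

section LastRowCompanion

variable {R : Type*} [CommRing R] {n : ℕ}

def lastRowCompanion (c : Fin (n + 1) → R) : Matrix (Fin (n + 1)) (Fin (n + 1)) R :=
  Matrix.of fun i j => if i = Fin.last n then c j else if (j : ℕ) = i + 1 then 1 else 0

theorem lastRowCompanion_mulVec_powers {c : Fin (n + 1) → R} {x : R}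
    (hx : x ^ (n + 1) = ∑ j, c j * x ^ (j : ℕ)) :
    lastRowCompanion c *ᵥ (fun j : Fin (n + 1) => x ^ (j : ℕ))
      = x • fun j : Fin (n + 1) => x ^ (j : ℕ) := by
  ext i
  by_cases hi : i = Fin.last n
  · simp [mulVec, dotProduct, lastRowCompanion, hi, ← hx, pow_succ']
  · have hlt : (i : ℕ) + 1 < n + 1 := by
      have := Fin.val_lt_last hi
      omega
    rw [mulVec, dotProduct, Finset.sum_eq_single ⟨(i : ℕ) + 1, hlt⟩]
    · simp [lastRowCompanion, hi, pow_succ']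
    · intro j _ hj
      simp [lastRowCompanion, hi, Fin.ext_iff.not.mp hj]
    · simp

theorem lastRowCompanion_mul_vandermonde_transpose {c x : Fin (n + 1) → R}
    (hx : ∀ m, x m ^ (n + 1) = ∑ j, c j * x m ^ (j : ℕ)) :
    lastRowCompanion c * (vandermonde x)ᵀ = (vandermonde x)ᵀ * diagonal x := by
  ext i m
  rw [mul_diagonal]
  simpa [mul_apply, mulVec, dotProduct, vandermonde_apply, mul_comm] using
    congrFun (lastRowCompanion_mulVec_powers (hx m)) i

end LastRowCompanion

section Field

variable {K : Type*} [Field K] {n : ℕ} {c x : Fin (n + 1) → K}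

theorem isUnit_det_vandermonde_transpose (hinj : Function.Injective x) :
    IsUnit (vandermonde x)ᵀ.det := by
  rw [det_transpose, isUnit_iff_ne_zero]
  exact det_vandermonde_ne_zero_iff.mpr hinj

theorem lastRowCompanion_conj_vandermonde (hinj : Function.Injective x)
    (hx : ∀ m, x m ^ (n + 1) = ∑ j, c j * x m ^ (j : ℕ)) :
    ((vandermonde x)ᵀ)⁻¹ * lastRowCompanion c * (vandermonde x)ᵀ = diagonal x := by
  rw [mul_assoc, lastRowCompanion_mul_vandermonde_transpose hx, ← mul_assoc,
    nonsing_inv_mul _ (isUnit_det_vandermonde_transpose hinj), one_mul]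

theorem charpoly_lastRowCompanion (hinj : Function.Injective x)
    (hx : ∀ m, x m ^ (n + 1) = ∑ j, c j * x m ^ (j : ℕ)) :
    (lastRowCompanion c).charpoly = ∏ m, (X - C (x m)) := by
  let V := ((isUnit_iff_isUnit_det _).mpr (isUnit_det_vandermonde_transpose hinj)).unit
  rw [← charpoly_diagonal, ← lastRowCompanion_conj_vandermonde hinj hx, ← charpoly_units_conj' V]
  rfl

end Field

noncomputable def bandMatrixLastRow (Δv vj : ℝ) : Fin 5 → ℝ :=
  ![5*Δv^4*vj/336 - 5*Δv^2*vj^3/18 + vj^5,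
    -5*Δv^4/336 + 5*Δv^2*vj^2/6 - 5*vj^4,
    -5*Δv^2*vj/6 + 10*vj^3,
    (5/18) * (Δv^2 - 36*vj^2),
    5*vj]

theorem bandMatrix_eq_lastRowCompanion (Δv vj : ℝ) :
    bandMatrix Δv vj = lastRowCompanion (bandMatrixLastRow Δv vj) := by
  ext i j
  fin_cases i <;> fin_cases j <;> simp [bandMatrix, bandMatrixLastRow, lastRowCompanion]

noncomputable def legendreQuintic (t : ℝ) : ℝ := t ^ 5 - 5/18 * t ^ 3 + 5/336 * t

theorem legendreQuintic_neg (t : ℝ) : legendreQuintic (-t) = -legendreQuintic t := by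
  unfold legendreQuintic
  ring

theorem legendreQuintic_sqrt_eq_zero {s : ℝ} (hs : 0 ≤ s) (hquad : s ^ 2 - 5/18 * s + 5/336 = 0) :
    legendreQuintic √s = 0 := by
  unfold legendreQuintic
  linear_combination (√s ^ 3 + (s - 5/18) * √s) * Real.sq_sqrt hs + √s * hquad

theorem pow_five_eq_bandMatrixLastRow_sum {Δv vj t : ℝ} (ht : legendreQuintic t = 0) :
    (vj + t * Δv) ^ 5 = ∑ k, bandMatrixLastRow Δv vj k * (vj + t * Δv) ^ (k : ℕ) := by
  unfold legendreQuintic at ht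
  simp only [bandMatrixLastRow, Fin.sum_univ_five, Fin.isValue, cons_val_zero, cons_val_one,
    cons_val, Fin.coe_ofNat_eq_mod, Nat.zero_mod, Nat.one_mod, Nat.reduceMod, pow_zero, pow_one]
  linear_combination Δv ^ 5 * ht

noncomputable def gaussLegendreNodes : Fin 5 → ℝ :=
  ![-√(5/36 + √70/126), -√(5/36 - √70/126), 0, √(5/36 - √70/126), √(5/36 + √70/126)]

theorem sqrt_seventy_lt_nine : √70 < 9 := by
  rw [Real.sqrt_lt' (by norm_num)]
  norm_num

theorem gaussLegendreNodes_strictMono : StrictMono gaussLegendreNodes := by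
  have h70 := sqrt_seventy_lt_nine
  have hinner : 0 < √(5/36 - √70/126) := Real.sqrt_pos.mpr (by linarith)
  have houter : √(5/36 - √70/126) < √(5/36 + √70/126) :=
    Real.sqrt_lt_sqrt (by linarith) (by linarith [Real.sqrt_pos.mpr (by norm_num : (0:ℝ) < 70)])
  rw [Fin.strictMono_iff_lt_succ]
  intro i
  fin_cases i <;>
    simp only [gaussLegendreNodes, Fin.isValue, Fin.zero_eta, Fin.mk_one, Fin.reduceFinMk,
      Fin.reduceCastSucc, Fin.reduceSucc, cons_val_zero, cons_val_one, cons_val] <;>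
    linarith

theorem legendreQuintic_gaussLegendreNodes (m : Fin 5) :
    legendreQuintic (gaussLegendreNodes m) = 0 := by
  have h70 : √70 ^ 2 = 70 := Real.sq_sqrt (by norm_num)
  have hplus : legendreQuintic √(5/36 + √70/126) = 0 :=
    legendreQuintic_sqrt_eq_zero (by positivity) (by linear_combination h70 / 15876)
  have hminus : legendreQuintic √(5/36 - √70/126) = 0 :=
    legendreQuintic_sqrt_eq_zero (by linarith [sqrt_seventy_lt_nine])
      (by linear_combination h70 / 15876)
  have hzero : legendreQuintic 0 = 0 := by simp [legendreQuintic]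
  fin_cases m <;> simp [gaussLegendreNodes, legendreQuintic_neg, hplus, hminus, hzero]

/-- There exist five distinct real constants `c₁ < ⋯ < c₅` (the rescaled
Gauss–Legendre nodes) such that for every band (any `Δv > 0`, `vj ∈ ℝ`)
the characteristic polynomial of `A^(j)` is `∏ₘ (λ − vⱼ − cₘ Δv)`; in
particular `A^(j)` has five distinct real eigenvalues and is diagonalizable
over ℝ. -/
theorem stmt_2 :
    ∃ c : Fin 5 → ℝ, StrictMono c ∧
      ∀ (Δv vj : ℝ), 0 < Δv →
        ((bandMatrix Δv vj).charpoly
            = ∏ m : Fin 5, (X - C (vj + c m * Δv))) ∧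
        (Function.Injective (fun m : Fin 5 => vj + c m * Δv)) ∧
        ∃ R : Matrix (Fin 5) (Fin 5) ℝ, IsUnit R.det ∧
          R⁻¹ * bandMatrix Δv vj * R
            = Matrix.diagonal (fun m : Fin 5 => vj + c m * Δv) := by
  refine ⟨gaussLegendreNodes, gaussLegendreNodes_strictMono, fun Δv vj hΔv => ?_⟩
  have hinj : Function.Injective (fun m : Fin 5 => vj + gaussLegendreNodes m * Δv) :=
    ((gaussLegendreNodes_strictMono.mul_const hΔv).const_add vj).injective
  have hroot (m : Fin 5) := pow_five_eq_bandMatrixLastRow_sum (Δv := Δv) (vj := vj)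
    (legendreQuintic_gaussLegendreNodes m)
  rw [bandMatrix_eq_lastRowCompanion]
  exact ⟨charpoly_lastRowCompanion hinj hroot, hinj, _, isUnit_det_vandermonde_transpose hinj,
    lastRowCompanion_conj_vandermonde hinj hroot⟩
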